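/- Let δ be a semi-flower automaton with state set Q, alphabet A, and initial-final state q0, and suppose that for every letter b ∈ A the letter map b̄ : Q → Q, q ↦ δ(q,b), is bijective (a permutation SFA). Then there exists a circular permutation f : Q → Q such that for every word x ∈ A* there is k ∈ ℕ with x̄ = f^k; in particular, the transition monoid {x̄ : x ∈ A*} is a cyclic group. -/

import Mathlib

/-- Extension of the transition function `δ : Q → A → Q` to words (lists of letters):
`δ*(q, ε) = q` and `δ*(q, a·w) = δ*(δ(q,a), w)`. -/
def deltaStar {Q A : Type*} (δ : Q → A → Q) : Q → List A → Q
  | q, [] => q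
  | q, a :: w => deltaStar δ (δ q a) w

/-- `δ` (with initial-final state `q0`) is a semi-flower automaton: every state is
accessible and coaccessible, and every cycle passes through `q0` (i.e. for every
nonempty word `w` labelling a cycle at `q`, some prefix of `w` leads from `q` to `q0`). -/
def IsSFA {Q A : Type*} (δ : Q → A → Q) (q0 : Q) : Prop :=
  (∀ q : Q, ∃ w : List A, deltaStar δ q0 w = q) ∧
  (∀ q : Q, ∃ w : List A, deltaStar δ q w = q0) ∧
  (∀ (q : Q) (w : List A), w ≠ [] → deltaStar δ q w = q →
    ∃ u : List A, u <+: w ∧ deltaStar δ q u = q0)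

/-- A map `f : Q → Q` is a circular permutation if it is bijective and for all
`p q : Q` there is `k : ℕ` with `f^[k] p = q`. -/
def IsCircularPerm {Q : Type*} (f : Q → Q) : Prop :=
  Function.Bijective f ∧ ∀ p q : Q, ∃ k : ℕ, f^[k] p = q

/-- The set of branch points going in (bpis): states that are the target of two
distinct transitions. -/
def BPI {Q A : Type*} (δ : Q → A → Q) : Set Q :=
  {q | ∃ pb₁ pb₂ : Q × A, pb₁ ≠ pb₂ ∧ δ pb₁.1 pb₁.2 = q ∧ δ pb₂.1 pb₂.2 = q}



/-!
Fix a letter `a` and let `f = ā`. Since `f` permutes the finite set `Q`, every state lies on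
an `f`-cycle, which must pass through `q0`; hence `f` is a circular permutation. Let `s q` be
the number of `f`-steps from `q` to `q0`. For any letter `b` and `q ≠ q0`, if
`s (δ q b) ≥ s q` then the word `b a^k` with `k = s (δ q b) - s q` is a cycle at `q` none of
whose prefixes reaches `q0`; so `s (δ q b) < s q`. As `b̄` is injective, induction on `s q`
upgrades this to `δ q b = f q`, and bijectivity settles `q = q0`. So all letters act as `f`,
and a word `x` acts as `f^|x|`.
-/

open Function

def CyclesPassThrough {Q A : Type*} (δ : Q → A → Q) (q0 : Q) : Prop :=
  ∀ (q : Q) (w : List A), w ≠ [] → deltaStar δ q w = q →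
    ∃ u : List A, u <+: w ∧ deltaStar δ q u = q0

def letterMap {Q A : Type*} (δ : Q → A → Q) (a : A) : Q → Q := fun q => δ q a

section Words

variable {Q A : Type*} (δ : Q → A → Q)

lemma deltaStar_cons (q : Q) (a : A) (w : List A) :
    deltaStar δ q (a :: w) = deltaStar δ (δ q a) w := rfl

lemma deltaStar_replicate (a : A) (q : Q) (k : ℕ) :
    deltaStar δ q (List.replicate k a) = (letterMap δ a)^[k] q := by
  induction k generalizing q with
  | zero => rfl
  | succ k ih => rw [List.replicate_succ, deltaStar_cons, ih, iterate_succ_apply]; rfl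

lemma deltaStar_eq_iterate_length {f : Q → Q} (hδ : ∀ q b, δ q b = f q) (q : Q) (x : List A) :
    deltaStar δ q x = f^[x.length] q := by
  induction x generalizing q with
  | nil => rfl
  | cons b x ih => rw [deltaStar_cons, ih, hδ, List.length_cons, iterate_succ_apply]

lemma subsingleton_of_isEmpty_alphabet [IsEmpty A] {q0 : Q}
    (hacc : ∀ q, ∃ w : List A, deltaStar δ q0 w = q) : Subsingleton Q := by
  have h : ∀ q, q = q0 := fun q => by
    obtain ⟨_ | ⟨c, _⟩, hw⟩ := hacc q
    exacts [hw.symm, isEmptyElim c]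
  exact ⟨fun p q => (h p).trans (h q).symm⟩

end Words

lemma isCircularPerm_id {Q : Type*} [Subsingleton Q] : IsCircularPerm (id : Q → Q) :=
  ⟨bijective_id, fun _ _ => ⟨0, Subsingleton.elim _ _⟩⟩

lemma isCircularPerm_of_forall_exists_iterate_eq {Q : Type*} [Finite Q] {f : Q → Q} {q0 : Q}
    (hf : Injective f) (hreach : ∀ q, ∃ k, f^[k] q = q0) : IsCircularPerm f := by
  refine ⟨Finite.injective_iff_bijective.mp hf, fun p q => ?_⟩
  obtain ⟨k, hk⟩ := hreach p
  obtain ⟨l, hl⟩ := hreach q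
  obtain ⟨m, hm, hper⟩ := hf.mem_periodicPts q
  refine ⟨m * l - l + k, ?_⟩
  rw [iterate_add_apply, hk, ← hl, ← iterate_add_apply,
    Nat.sub_add_cancel (Nat.le_mul_of_pos_left l hm)]
  exact hper.mul_const l

lemma eq_of_forall_ne_apply_eq {α β : Type*} {f g : α → β} (hf : Surjective f)
    (hg : Injective g) (x₀ : α) (h : ∀ x ≠ x₀, g x = f x) : g = f := by
  funext x
  by_cases hx : x = x₀
  · subst hx
    obtain ⟨y, hy⟩ := hf (g x)
    by_cases hyx : y = x
    · rw [← hy, hyx]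
    · exact absurd (hg ((h y hyx).trans hy)) hyx
  · exact h x hx

section StepsTo

variable {Q : Type*} {f : Q → Q} {q0 q : Q}

/-- The number of `f`-steps from `q` to `q0` (junk value `0` if `q0` is never reached). -/
noncomputable def stepsTo (f : Q → Q) (q0 q : Q) : ℕ := sInf {k | f^[k] q = q0}

lemma iterate_stepsTo (h : ∃ k, f^[k] q = q0) : f^[stepsTo f q0 q] q = q0 := Nat.sInf_mem h

lemma stepsTo_le {k : ℕ} (h : f^[k] q = q0) : stepsTo f q0 q ≤ k := Nat.sInf_le h

lemma iterate_ne_of_lt_stepsTo {k : ℕ} (h : k < stepsTo f q0 q) : f^[k] q ≠ q0 :=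
  Nat.notMem_of_lt_sInf h

lemma stepsTo_pos (h : ∃ k, f^[k] q = q0) (hq : q ≠ q0) : 0 < stepsTo f q0 q :=
  Nat.pos_of_ne_zero fun h0 => hq (by simpa [h0] using iterate_stepsTo h)

lemma stepsTo_iterate (h : ∃ k, f^[k] q = q0) {i : ℕ} (hi : i ≤ stepsTo f q0 q) :
    stepsTo f q0 (f^[i] q) = stepsTo f q0 q - i := by
  have hreach : f^[stepsTo f q0 q - i] (f^[i] q) = q0 := by
    rw [← iterate_add_apply, Nat.sub_add_cancel hi, iterate_stepsTo h]
  refine le_antisymm (stepsTo_le hreach) ?_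
  by_contra! hlt
  refine iterate_ne_of_lt_stepsTo (f := f) (q0 := q0) (q := q)
    (k := stepsTo f q0 (f^[i] q) + i) (by omega) ?_
  rw [iterate_add_apply, iterate_stepsTo ⟨_, hreach⟩]

lemma stepsTo_apply (h : ∃ k, f^[k] q = q0) (hq : 0 < stepsTo f q0 q) :
    stepsTo f q0 (f q) = stepsTo f q0 q - 1 :=
  stepsTo_iterate (i := 1) h hq

lemma stepsTo_injective (hf : Injective f) (hreach : ∀ q, ∃ k, f^[k] q = q0) :
    Injective (stepsTo f q0) := fun p q h =>
  hf.iterate (stepsTo f q0 q) <| by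
    rw [← h, iterate_stepsTo (hreach p), h, iterate_stepsTo (hreach q)]

lemma apply_eq_of_stepsTo_apply_lt {g : Q → Q} (hf : Injective f) (hg : Injective g)
    (hreach : ∀ q, ∃ k, f^[k] q = q0)
    (hlt : ∀ q, 0 < stepsTo f q0 q → stepsTo f q0 (g q) < stepsTo f q0 q)
    (hq : 0 < stepsTo f q0 q) : g q = f q := by
  induction hn : stepsTo f q0 q using Nat.strong_induction_on generalizing q with
  | _ n ih =>
  subst hn
  have hgq := hlt q hq
  refine stepsTo_injective hf hreach ?_
  rw [stepsTo_apply (hreach q) hq]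
  by_contra hne
  -- the state between `q` and `q0` at which `g` would have to collide with `g q`
  set p := f^[stepsTo f q0 q - (stepsTo f q0 (g q) + 1)] q
  have hp : stepsTo f q0 p = stepsTo f q0 (g q) + 1 := by
    rw [stepsTo_iterate (hreach q) (by omega)]; omega
  have hgp : g p = f p := ih _ (by omega) (by omega) hp
  have hpq : p = q := hg <|
    stepsTo_injective hf hreach (by rw [hgp, stepsTo_apply (hreach p) (by omega), hp]; rfl)
  rw [hpq] at hp
  omega

lemma eq_of_stepsTo_apply_lt {g : Q → Q} (hf : Bijective f) (hg : Injective g)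
    (hreach : ∀ q, ∃ k, f^[k] q = q0)
    (hlt : ∀ q, 0 < stepsTo f q0 q → stepsTo f q0 (g q) < stepsTo f q0 q) : g = f :=
  eq_of_forall_ne_apply_eq hf.2 hg q0 fun q hq =>
    apply_eq_of_stepsTo_apply_lt hf.1 hg hreach hlt (stepsTo_pos (hreach q) hq)

end StepsTo

namespace CyclesPassThrough

variable {Q A : Type*} {δ : Q → A → Q} {q0 : Q}

lemma exists_take (h : CyclesPassThrough δ q0) {q : Q} {w : List A} (hw : w ≠ [])
    (hcyc : deltaStar δ q w = q) : ∃ j, deltaStar δ q (w.take j) = q0 := by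
  obtain ⟨u, hu, hq0⟩ := h q w hw hcyc
  exact ⟨u.length, List.prefix_iff_eq_take.mp hu ▸ hq0⟩

variable [Finite Q]

lemma exists_iterate_letterMap_eq (h : CyclesPassThrough δ q0) {a : A}
    (ha : Injective (letterMap δ a)) (q : Q) : ∃ k, (letterMap δ a)^[k] q = q0 := by
  obtain ⟨m, hm, hper⟩ := ha.mem_periodicPts q
  obtain ⟨j, hj⟩ := h.exists_take (w := List.replicate m a)
    (by simpa using hm.ne') (by rw [deltaStar_replicate]; exact hper)
  exact ⟨min j m, by rwa [List.take_replicate, deltaStar_replicate] at hj⟩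

lemma stepsTo_letterMap_lt (h : CyclesPassThrough δ q0) {a : A}
    (ha : Injective (letterMap δ a)) (b : A) {q : Q} (hq : 0 < stepsTo (letterMap δ a) q0 q) :
    stepsTo (letterMap δ a) q0 (δ q b) < stepsTo (letterMap δ a) q0 q := by
  have hreach := h.exists_iterate_letterMap_eq ha
  by_contra! hle
  set k := stepsTo (letterMap δ a) q0 (δ q b) - stepsTo (letterMap δ a) q0 q
  have hback : deltaStar δ q (b :: List.replicate k a) = q := by
    rw [deltaStar_cons, deltaStar_replicate]
    exact stepsTo_injective ha hreach (by rw [stepsTo_iterate (hreach _) (Nat.sub_le _ _)]; omega)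
  obtain ⟨j, hj⟩ := h.exists_take (List.cons_ne_nil _ _) hback
  cases j with
  | zero => exact iterate_ne_of_lt_stepsTo (k := 0) hq hj
  | succ j =>
    rw [List.take_succ_cons, List.take_replicate, deltaStar_cons, deltaStar_replicate] at hj
    exact iterate_ne_of_lt_stepsTo (by omega) hj

lemma letterMap_eq (h : CyclesPassThrough δ q0) {a b : A} (ha : Bijective (letterMap δ a))
    (hb : Injective (letterMap δ b)) : letterMap δ b = letterMap δ a :=
  eq_of_stepsTo_apply_lt ha hb (h.exists_iterate_letterMap_eq ha.1)
    fun _ => h.stepsTo_letterMap_lt ha.1 b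

end CyclesPassThrough

theorem permutation_sfa_monoid_cyclic_general {Q A : Type*} [Fintype Q]
    (δ : Q → A → Q) (q0 : Q) (hSFA : IsSFA δ q0)
    (hperm : ∀ b : A, Function.Bijective (fun q => δ q b)) :
    ∃ f : Q → Q, IsCircularPerm f ∧
      ∀ x : List A, ∃ k : ℕ, (fun q => deltaStar δ q x) = f^[k] := by
  obtain ⟨hacc, -, hcyc⟩ := hSFA
  obtain ⟨f, hf, hδ⟩ : ∃ f, IsCircularPerm f ∧ ∀ q b, δ q b = f q := by
    rcases isEmpty_or_nonempty A with _ | ⟨⟨a⟩⟩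
    · have := subsingleton_of_isEmpty_alphabet δ hacc
      exact ⟨id, isCircularPerm_id, fun _ b => isEmptyElim b⟩
    · have hreach := CyclesPassThrough.exists_iterate_letterMap_eq hcyc (hperm a).1
      exact ⟨letterMap δ a, isCircularPerm_of_forall_exists_iterate_eq (hperm a).1 hreach,
        fun q b => congrFun (CyclesPassThrough.letterMap_eq hcyc (hperm a) (hperm b).1) q⟩
  exact ⟨f, hf, fun x => ⟨x.length, funext fun q => deltaStar_eq_iterate_length δ hδ q x⟩⟩

/-- In a permutation semi-flower automaton there is a circular permutation `f`
such that every word map is a power of `f`; in particular the transition monoid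
is a cyclic group. -/
theorem permutation_sfa_monoid_cyclic {Q A : Type*} [Fintype Q] [Nonempty Q] [Fintype A]
    (δ : Q → A → Q) (q0 : Q) (hSFA : IsSFA δ q0)
    (hperm : ∀ b : A, Function.Bijective (fun q => δ q b)) :
    ∃ f : Q → Q, IsCircularPerm f ∧
      ∀ x : List A, ∃ k : ℕ, (fun q => deltaStar δ q x) = f^[k] :=
  permutation_sfa_monoid_cyclic_general δ q0 hSFA hperm
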